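/- The string addition operation defined via the carry predicate is associative: for all finite X, Y, Z ⊆ ℕ, X + (Y + Z) = (X + Y) + Z, where + is the bitwise addition with carries. -/

import Mathlib

def carry (i : ℕ) (U V : Set ℕ) : Prop :=
  ∃ j < i, j ∈ U ∧ j ∈ V ∧ ∀ ℓ, j < ℓ → ℓ < i → Xor' (ℓ ∈ U) (ℓ ∈ V)

def sadd (U V : Set ℕ) : Set ℕ :=
  {i | Xor' (Xor' (i ∈ U) (i ∈ V)) (carry i U V)}

/-!
Carries propagate as in a full adder: `carry (i + 1) U V` is the carry out of the bits
`i ∈ U`, `i ∈ V` and the carry in `carry i U V`. By induction on `i`, the two carries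
`(carry i Y Z, carry i X (Y + Z))` met in computing `X + (Y + Z)` are a permutation of the two
carries `(carry i X Y, carry i (X + Y) Z)` met in computing `(X + Y) + Z`. Bit `i` of either side
is `x ⊕ y ⊕ z` xor-ed with its two carries, hence the sides agree.
-/

def carryOut (p q r : Prop) : Prop := p ∧ q ∨ Xor p q ∧ r

def PermPair (a b c d : Prop) : Prop := (a ↔ c) ∧ (b ↔ d) ∨ (a ↔ d) ∧ (b ↔ c)

theorem PermPair.xor_iff {a b c d : Prop} (h : PermPair a b c d) : Xor a b ↔ Xor c d := by
  unfold PermPair at h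
  grind

theorem PermPair.carryOut {x y z a b c d : Prop} (h : PermPair a b c d) :
    PermPair (carryOut y z a) (carryOut x (Xor (Xor y z) a) b)
      (carryOut x y c) (carryOut (Xor (Xor x y) c) z d) := by
  unfold PermPair _root_.carryOut at *
  grind

theorem not_carry_zero (U V : Set ℕ) : ¬carry 0 U V := by
  rintro ⟨j, hj, -⟩
  exact j.not_lt_zero hj

theorem carry_succ (i : ℕ) (U V : Set ℕ) :
    carry (i + 1) U V ↔ carryOut (i ∈ U) (i ∈ V) (carry i U V) := by
  constructor
  · rintro ⟨j, hj, hjU, hjV, hxor⟩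
    rcases Nat.lt_succ_iff_lt_or_eq.1 hj with hj | rfl
    · exact .inr ⟨hxor i hj i.lt_succ_self, j, hj, hjU, hjV,
        fun ℓ hjℓ hℓi => hxor ℓ hjℓ (hℓi.trans i.lt_succ_self)⟩
    · exact .inl ⟨hjU, hjV⟩
  · rintro (⟨hiU, hiV⟩ | ⟨hxi, j, hj, hjU, hjV, hxor⟩)
    · exact ⟨i, i.lt_succ_self, hiU, hiV, fun ℓ hiℓ hℓi => absurd hℓi (by omega)⟩
    · refine ⟨j, hj.trans i.lt_succ_self, hjU, hjV, fun ℓ hjℓ hℓi => ?_⟩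
      rcases Nat.lt_succ_iff_lt_or_eq.1 hℓi with hℓi | rfl
      · exact hxor ℓ hjℓ hℓi
      · exact hxi

theorem mem_sadd {i : ℕ} {U V : Set ℕ} :
    i ∈ sadd U V ↔ Xor (Xor (i ∈ U) (i ∈ V)) (carry i U V) :=
  Iff.rfl

theorem permPair_carry (X Y Z : Set ℕ) (i : ℕ) :
    PermPair (carry i Y Z) (carry i X (sadd Y Z)) (carry i X Y) (carry i (sadd X Y) Z) := by
  induction i with
  | zero => simp only [PermPair, not_carry_zero, iff_self, and_self, or_self]
  | succ i ih =>
    simp only [carry_succ, mem_sadd]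
    exact ih.carryOut

theorem string_add_assoc_general (X Y Z : Set ℕ) :
    sadd X (sadd Y Z) = sadd (sadd X Y) Z := by
  ext i
  have hcarries := (permPair_carry X Y Z i).xor_iff
  simp only [mem_sadd]
  grind

theorem string_add_assoc (X Y Z : Set ℕ) (hX : X.Finite) (hY : Y.Finite) (hZ : Z.Finite) :
    sadd X (sadd Y Z) = sadd (sadd X Y) Z :=
  string_add_assoc_general X Y Z
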